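/- Let n, r be natural numbers, i, j : Fin n, and Y ∈ ℝ. Then the function U : Matrix (Fin n) (Fin r) ℝ ↦ |Y − (U * Uᵀ) i j| + ‖U‖_F² is convex, where ‖U‖_F denotes the Frobenius norm of U. Equivalently, the robust PCA component function U ↦ |Y − (U Uᵀ)_{ij}| is τ-weakly convex with parameter τ = 2 with respect to the Frobenius inner product. -/

import Mathlib

/-! Since `|t| = max t (-t)`, the function is the maximum of `Y + (‖U‖² - q U)` and
`-Y + (‖U‖² + q U)`, where `q U = (U Uᵀ)ᵢⱼ = ⟨Uᵢ, Uⱼ⟩` is a quadratic form with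
`|q U| ≤ (‖Uᵢ‖² + ‖Uⱼ‖²) / 2 ≤ ‖U‖²`. Hence `‖U‖² ± q U` are positive semidefinite quadratic
forms, and these are convex because the Jensen gap of `x ↦ B x x` at weights `a, b` is
`a b B (x - y) (x - y)`. -/

open Matrix

theorem LinearMap.convexOn_apply_self {E : Type*} [AddCommGroup E] [Module ℝ E] {s : Set E}
    (hs : Convex ℝ s) (B : E →ₗ[ℝ] E →ₗ[ℝ] ℝ) (hB : ∀ x, 0 ≤ B x x) :
    ConvexOn ℝ s fun x => B x x := by
  refine ⟨hs, fun x _ y _ a b ha hb hab => ?_⟩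
  obtain rfl : b = 1 - a := by linarith
  have gap : a • B x x + (1 - a) • B y y - B (a • x + (1 - a) • y) (a • x + (1 - a) • y)
      = a * (1 - a) * B (x - y) (x - y) := by
    simp only [map_add, map_smul, map_sub, LinearMap.add_apply, LinearMap.smul_apply,
      LinearMap.sub_apply, smul_eq_mul]
    ring
  nlinarith [hB (x - y), mul_nonneg ha hb]

theorem ConvexOn.abs_add {E : Type*} [AddCommMonoid E] [Module ℝ E] {s : Set E} {f g : E → ℝ}
    (hadd : ConvexOn ℝ s (g + f)) (hsub : ConvexOn ℝ s (g - f)) :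
    ConvexOn ℝ s fun x => |f x| + g x := by
  have h : (fun x => |f x| + g x) = (g + f) ⊔ (g - f) := by
    funext x
    rw [abs_eq_max_neg, ← max_add_add_right]
    exact congr_arg₂ max (add_comm _ _) (neg_add_eq_sub _ _)
  exact h ▸ hadd.sup hsub

namespace Matrix

variable {m p : Type*} [Fintype m] [Fintype p]

theorem abs_mul_transpose_apply_le (U : Matrix m p ℝ) (i j : m) :
    |(U * Uᵀ) i j| ≤ ∑ a, ∑ b, U a b ^ 2 := by
  have row_le : ∀ a, ∑ b, U a b ^ 2 ≤ ∑ a, ∑ b, U a b ^ 2 := fun a =>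
    Finset.univ.single_le_sum (f := fun a => ∑ b, U a b ^ 2)
      (fun _ _ => Finset.sum_nonneg fun _ _ => sq_nonneg _) (Finset.mem_univ a)
  calc |(U * Uᵀ) i j| ≤ ∑ b, |U i b * U j b| := by
        simpa [mul_apply] using Finset.abs_sum_le_sum_abs (fun b => U i b * U j b) .univ
    _ ≤ ∑ b, (U i b ^ 2 + U j b ^ 2) / 2 := by
        gcongr with b
        rw [abs_mul]
        nlinarith [sq_nonneg (|U i b| - |U j b|), sq_abs (U i b), sq_abs (U j b)]
    _ = (∑ b, U i b ^ 2 + ∑ b, U j b ^ 2) / 2 := by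
        rw [← Finset.sum_add_distrib, Finset.sum_div]
    _ ≤ ∑ a, ∑ b, U a b ^ 2 := by linarith [row_le i, row_le j]

def frobeniusAddSmulEntryBilin (ε : ℝ) (i j : m) :
    Matrix m p ℝ →ₗ[ℝ] Matrix m p ℝ →ₗ[ℝ] ℝ :=
  LinearMap.mk₂ ℝ (fun U V => ∑ a, ∑ b, U a b * V a b + ε * (U * Vᵀ) i j)
    (fun U U' V => by
      simp only [Matrix.add_mul, add_apply, _root_.add_mul, Finset.sum_add_distrib]; ring)
    (fun c U V => by
      simp only [smul_mul, smul_apply, smul_eq_mul, mul_assoc, ← Finset.mul_sum]; ring)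
    (fun U V V' => by
      simp only [transpose_add, Matrix.mul_add, add_apply, _root_.mul_add,
        Finset.sum_add_distrib]; ring)
    (fun c U V => by
      simp only [transpose_smul, Matrix.mul_smul, smul_apply, smul_eq_mul, mul_left_comm _ c,
        ← Finset.mul_sum]; ring)

@[simp]
theorem frobeniusAddSmulEntryBilin_apply (ε : ℝ) (i j : m) (U V : Matrix m p ℝ) :
    frobeniusAddSmulEntryBilin ε i j U V = ∑ a, ∑ b, U a b * V a b + ε * (U * Vᵀ) i j :=
  rfl

theorem frobeniusAddSmulEntryBilin_self_nonneg {ε : ℝ} (hε : |ε| ≤ 1) (i j : m)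
    (U : Matrix m p ℝ) : 0 ≤ frobeniusAddSmulEntryBilin ε i j U U := by
  have hq := U.abs_mul_transpose_apply_le i j
  have hεq : |ε * (U * Uᵀ) i j| ≤ ∑ a, ∑ b, U a b ^ 2 := by
    rw [abs_mul]
    exact le_trans (mul_le_of_le_one_left (abs_nonneg _) hε) hq
  simp only [frobeniusAddSmulEntryBilin_apply, ← sq]
  linarith [neg_abs_le (ε * (U * Uᵀ) i j)]

end Matrix

/-- The robust PCA component U ↦ |Y − (UUᵀ)ᵢⱼ| is weakly convex with parameter 2 with
respect to the Frobenius inner product; here ‖U‖_F² = ∑ᵢⱼ Uᵢⱼ². -/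
theorem robust_pca_weaklyConvex
    (n r : ℕ) (i j : Fin n) (Y : ℝ) :
    ConvexOn ℝ Set.univ (fun U : Matrix (Fin n) (Fin r) ℝ =>
      |Y - (U * Uᵀ) i j| + ∑ i', ∑ j', (U i' j') ^ 2) := by
  have hconv : ∀ ε : ℝ, |ε| ≤ 1 → ConvexOn ℝ Set.univ fun U : Matrix (Fin n) (Fin r) ℝ =>
      ∑ i', ∑ j', U i' j' ^ 2 + ε * (U * Uᵀ) i j := fun ε hε => by
    simpa only [frobeniusAddSmulEntryBilin_apply, ← sq] using
      (frobeniusAddSmulEntryBilin ε i j).convexOn_apply_self convex_univ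
        (frobeniusAddSmulEntryBilin_self_nonneg hε i j)
  refine ConvexOn.abs_add ?_ ?_
  · exact ((hconv (-1) (by norm_num)).add_const Y).congr fun U _ => by
      simp only [Pi.add_apply]; ring
  · exact ((hconv 1 (by norm_num)).add_const (-Y)).congr fun U _ => by
      simp only [Pi.add_apply, Pi.sub_apply]; ring
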